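/- arXiv:1606.07257 — 8 statements merged into one kernel-verified Lean document; each statement's English description precedes it below -/
import Mathlib

section
/- If $(b_1,\ldots,b_n)$ results from a castling transformation of $(a_1,\ldots,a_n)$, i.e. $b_i = a_i$ for $i=1,\ldots,n-1$ and $b_n = \prod_{i=1}^{n-1} a_i - a_n$, then $N(b_1,\ldots,b_n) = N(a_1,\ldots,a_n)$, where $N(a_1,\ldots,a_n) := \sum_{i=1}^n a_i^2 - \prod_{i=1}^n a_i - n + 1$. -/
/-- Castling invariance of `N(a₁,…,aₙ) = ∑ aᵢ² - ∏ aᵢ - n + 1`: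
if `b` agrees with `a` on the first `n` entries and the last entry of `b`
is the product of the first `n` entries of `a` minus the last entry of `a`,
then `N(b) = N(a)`. -/
theorem castling_N_invariant (n : ℕ) (a b : Fin (n + 1) → ℤ)
    (h1 : ∀ i : Fin n, b i.castSucc = a i.castSucc)
    (h2 : b (Fin.last n) = (∏ i : Fin n, a i.castSucc) - a (Fin.last n)) :
    (∑ i, b i ^ 2) - (∏ i, b i) - (n + 1) + 1 =
      (∑ i, a i ^ 2) - (∏ i, a i) - (n + 1) + 1 := by
  rw [Fin.sum_univ_castSucc, Fin.sum_univ_castSucc, Fin.prod_univ_castSucc,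
    Fin.prod_univ_castSucc, h2]
  simp only [h1]
  ring
end

section
/- There are no positive integers $a,b,c$ such that $a^2+b^2+c^2-abc-2 = z$, where $z \equiv 1 \pmod 9$ or $z \equiv 4 \pmod 9$. In particular, $N(a,b,c) := a^2+b^2+c^2-abc-2$ never equals $1$ or $4$ for positive integers $a,b,c$. -/
/-- There are no positive integers `a, b, c` with
`a² + b² + c² - abc - 2 = z` when `z ≡ 1` or `z ≡ 4 (mod 9)`.
In particular `N(a,b,c)` never equals `1` or `4`. -/
theorem no_solutions_one_four_mod_nine (z : ℤ) (hz : z % 9 = 1 ∨ z % 9 = 4) :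
    ¬ ∃ a b c : ℤ, 0 < a ∧ 0 < b ∧ 0 < c ∧
      a ^ 2 + b ^ 2 + c ^ 2 - a * b * c - 2 = z := by
  rintro ⟨a, b, c, -, -, -, h⟩
  have key : ∀ x y w : ZMod 9, x ^ 2 + y ^ 2 + w ^ 2 - x * y * w - 2 ≠ 1 ∧
      x ^ 2 + y ^ 2 + w ^ 2 - x * y * w - 2 ≠ 4 := by decide
  have h9 : ((a : ZMod 9) ^ 2 + (b : ZMod 9) ^ 2 + (c : ZMod 9) ^ 2
      - (a : ZMod 9) * (b : ZMod 9) * (c : ZMod 9) - 2 = (z : ZMod 9)) := by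
    exact_mod_cast congrArg (Int.cast : ℤ → ZMod 9) h
  have hmod : ((z % 9 : ℤ) : ZMod 9) = (z : ZMod 9) := by
    have h90 : (9 : ZMod 9) = 0 := by decide
    conv_rhs => rw [← Int.emod_add_mul_ediv z 9]
    push_cast
    rw [h90]
    ring
  rcases hz with hz | hz
  · exact (key a b c).1 (h9.trans (by rw [← hmod, hz]; norm_num))
  · exact (key a b c).2 (h9.trans (by rw [← hmod, hz]; norm_num))
end

section
/- If $a,b,c$ are positive integers with $a^2+b^2+c^2-abc-2=0$ and $b=c$, then $a=b=c=1$. -/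
/-- If `a, b, c` are positive integers with `a² + b² + c² - abc - 2 = 0` and
`b = c`, then `a = b = c = 1`. -/
theorem N_zero_two_equal (a b c : ℤ) (ha : 0 < a) (hb : 0 < b) (hc : 0 < c)
    (heq : b = c) (h : a ^ 2 + b ^ 2 + c ^ 2 - a * b * c - 2 = 0) :
    a = 1 ∧ b = 1 ∧ c = 1 := by
  subst heq
  have key : (a - 2) * (b ^ 2 - a - 2) = 2 := by linear_combination -h
  have hd : (a - 2) ∣ 2 := ⟨_, key.symm⟩
  have hle : a ≤ 4 := by
    rcases lt_or_ge a 4 with h4 | h4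
    · omega
    · have := Int.le_of_dvd (by norm_num) hd
      omega
  interval_cases a
  · have hb1 : b ^ 2 = 1 := by nlinarith
    have : b = 1 := by nlinarith
    exact ⟨rfl, this, this⟩
  · omega
  · have h7 : b ^ 2 = 7 := by linarith
    have hb3 : b ≤ 3 := by nlinarith
    interval_cases b <;> omega
  · have h7 : b ^ 2 = 7 := by linarith
    have hb3 : b ≤ 3 := by nlinarith
    interval_cases b <;> omega
end

section
/- Let $a,b,c$ be positive integers with $a < b < c$ and $a^2+b^2+c^2-abc-2=0$. Then $c' := ab - c$ is a positive integer satisfying $a^2+b^2+c'^2-abc'-2=0$ and $c' < b$. -/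
/-- Descent step for `N = 0`: if `a < b < c` are positive integers with
`a² + b² + c² - abc - 2 = 0`, then `c' = ab - c` is a positive integer with
`a² + b² + c'² - abc' - 2 = 0` and `c' < b`. -/
theorem castling_descent_N_zero (a b c : ℤ) (ha : 0 < a)
    (hab : a < b) (hbc : b < c)
    (h : a ^ 2 + b ^ 2 + c ^ 2 - a * b * c - 2 = 0) :
    0 < a * b - c ∧
      a ^ 2 + b ^ 2 + (a * b - c) ^ 2 - a * b * (a * b - c) - 2 = 0 ∧
      a * b - c < b := by
  have ha3 : 3 ≤ a := by
    by_contra hlt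
    push_neg at hlt
    interval_cases a <;> nlinarith [sq_nonneg (b - c), sq_nonneg (b + c)]
  have hcc' : (a * b - c) * c = a ^ 2 + b ^ 2 - 2 := by linear_combination -h
  have hpos : 0 < a * b - c := by
    by_contra hle
    push_neg at hle
    nlinarith
  refine ⟨hpos, by linear_combination h, ?_⟩
  have hfb : (b - (a * b - c)) * (b - c) < 0 := by nlinarith
  by_contra hge
  push_neg at hge
  nlinarith
end

section
/- Let $a,b,c$ be positive integers with $a < b < c$ and $a^2+b^2+c^2-abc-4=0$. Then $c' := ab - c$ is a positive integer satisfying $a^2+b^2+c'^2-abc'-4=0$ and $c' < b$. -/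
/-- Descent step for `N = 2`: if `a < b < c` are positive integers with
`a² + b² + c² - abc - 4 = 0`, then `c' = ab - c` is a positive integer with
`a² + b² + c'² - abc' - 4 = 0` and `c' < b`. -/
theorem castling_descent_N_two (a b c : ℤ) (ha : 0 < a)
    (hab : a < b) (hbc : b < c)
    (h : a ^ 2 + b ^ 2 + c ^ 2 - a * b * c - 4 = 0) :
    0 < a * b - c ∧
      a ^ 2 + b ^ 2 + (a * b - c) ^ 2 - a * b * (a * b - c) - 4 = 0 ∧
      a * b - c < b := by
  have hprod : c * (a * b - c) = a ^ 2 + b ^ 2 - 4 := by linear_combination -h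
  have hc : 0 < c := by linarith
  have hpos : 0 < a ^ 2 + b ^ 2 - 4 := by nlinarith
  have hc' : 0 < a * b - c := by
    by_contra hle
    push_neg at hle
    nlinarith [mul_nonpos_of_nonneg_of_nonpos hc.le hle]
  refine ⟨hc', by linear_combination h, ?_⟩
  rcases (by omega : a = 1 ∨ a = 2 ∨ 3 ≤ a) with rfl | rfl | ha3
  · exfalso
    nlinarith [mul_nonneg (by linarith : (0:ℤ) ≤ c - 3) (by linarith : (0:ℤ) ≤ c - b - 1)]
  · exfalso
    nlinarith [mul_pos (sub_pos.2 hbc) (sub_pos.2 hbc)]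
  · by_contra hb'
    push_neg at hb'
    nlinarith [mul_nonneg (by linarith : (0:ℤ) ≤ c - b) (by linarith : (0:ℤ) ≤ a * b - c - b),
      mul_nonneg (mul_nonneg (by linarith : (0:ℤ) ≤ a - 2) (by linarith : (0:ℤ) ≤ b - a - 1))
        (by linarith : (0:ℤ) ≤ b + a + 1),
      mul_pos (by linarith : (0:ℤ) < a - 2) (by nlinarith : (0:ℤ) < a ^ 2 + a - 1)]
end

section
/- Let $a,b,c$ be integers with $2 \le a \le b \le c$ and $a^2+b^2+c^2-abc-2 \ge 3$. Then $ab \le 2c$. -/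
/-- If `2 ≤ a ≤ b ≤ c` and `a² + b² + c² - abc - 2 ≥ 3`, then `ab ≤ 2c`. -/
theorem ab_le_two_c (a b c : ℤ) (ha : 2 ≤ a) (hab : a ≤ b) (hbc : b ≤ c)
    (h : 3 ≤ a ^ 2 + b ^ 2 + c ^ 2 - a * b * c - 2) :
    a * b ≤ 2 * c := by
  rcases eq_or_lt_of_le ha with h2 | h3
  · subst h2; linarith
  · have ha3 : 3 ≤ a := h3
    by_contra hc
    push_neg at hc
    have h1 : (c - b) * (a * b - b - c) ≥ 0 := by
      apply mul_nonneg <;> nlinarith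
    have h2 : (a - 2) * b ^ 2 ≥ a ^ 2 := by nlinarith
    nlinarith [h1, h2]
end

section
/- Let $n \ge 4$ and let $a_1 \le \cdots \le a_n$ be integers with $a_i \ge 2$ for all $i$. If $a_n \le q/n$ where $q = \prod_{i=1}^{n-1} a_i$, then $N(a_1,\ldots,a_n) := \sum_{i=1}^n a_i^2 - \prod_{i=1}^n a_i - n + 1 < 0$. -/
/-- Let `n ≥ 4` and `a₁ ≤ ⋯ ≤ aₙ` be integers, all `≥ 2`, with
`q = a₁ ⋯ aₙ₋₁`. If `aₙ ≤ q / n` then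
`N(a₁,…,aₙ) = ∑ aᵢ² - ∏ aᵢ - n + 1 < 0`. -/
theorem N_neg_of_small_last (n : ℕ) (hn : 4 ≤ n + 1)
    (a : Fin (n + 1) → ℤ) (hmono : Monotone a) (h2 : ∀ i, 2 ≤ a i)
    (q : ℤ) (hq : q = ∏ i : Fin n, a i.castSucc)
    (hle : (a (Fin.last n) : ℚ) ≤ (q : ℚ) / (n + 1)) :
    (∑ i, a i ^ 2) - (∏ i, a i) - (n + 1) + 1 < 0 := by
  set M := a (Fin.last n) with hM
  have hM2 : 2 ≤ M := h2 _
  have hle' : ∀ i, a i ≤ M := fun i => hmono (Fin.le_last i)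
  -- sum bound
  have hsum : (∑ i, a i ^ 2) ≤ (n + 1 : ℤ) * M ^ 2 := by
    calc (∑ i, a i ^ 2) ≤ ∑ _i : Fin (n+1), M ^ 2 := by
          apply Finset.sum_le_sum
          intro i _
          have h0 : (0:ℤ) ≤ a i := le_trans (by norm_num) (h2 i)
          exact pow_le_pow_left₀ h0 (hle' i) 2
      _ = (n + 1 : ℤ) * M ^ 2 := by
          simp [Finset.sum_const, mul_comm]
  -- product
  have hprod : (∏ i, a i) = q * M := by
    rw [hq, Fin.prod_univ_castSucc]
  -- from hle: (n+1) * M ≤ q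
  have hnq : ((n : ℤ) + 1) * M ≤ q := by
    have hpos : (0:ℚ) < (n : ℚ) + 1 := by positivity
    rw [le_div_iff₀ hpos] at hle
    have : M * ((n:ℤ) + 1) ≤ q := by exact_mod_cast hle
    linarith
  have hqM : ((n : ℤ) + 1) * M ^ 2 ≤ q * M := by
    have := mul_le_mul_of_nonneg_right hnq (by linarith : (0:ℤ) ≤ M)
    nlinarith
  have hn' : (3 : ℤ) ≤ n := by exact_mod_cast (by omega : 3 ≤ n)
  rw [hprod]
  push_cast
  linarith
end

section
/- Let $n \ge 4$ and let $a_1 \le \cdots \le a_n$ be integers with $a_i \ge 2$ for all $i$, and let $q = \prod_{i=1}^{n-1} a_i$. If $q/n < a_n \le q/2$, then $N(a_1,\ldots,a_n) < 0$, where $N(a_1,\ldots,a_n) = \sum_{i=1}^n a_i^2 - \prod_{i=1}^n a_i - n + 1$. (Key estimate: $\frac{n-1}{4^{n-2}} q^2 + a_n^2 - q a_n \le 0$ on this interval.) -/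
lemma pow_aux (m : ℕ) : ((m : ℤ) + 4) ^ 2 ≤ 4 ^ (m + 2) := by
  induction m with
  | zero => norm_num
  | succ k ih =>
    push_cast
    have hk : (0 : ℤ) ≤ (k : ℤ) := Int.natCast_nonneg k
    calc ((k : ℤ) + 1 + 4) ^ 2 ≤ 4 * ((k : ℤ) + 4) ^ 2 := by nlinarith
      _ ≤ 4 * 4 ^ (k + 2) := by linarith
      _ = 4 ^ (k + 1 + 2) := by ring

/-- Let `n ≥ 4` and `a₁ ≤ ⋯ ≤ aₙ` be integers, all `≥ 2`, with
`q = a₁ ⋯ aₙ₋₁`. If `q / n < aₙ ≤ q / 2` then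
`N(a₁,…,aₙ) = ∑ aᵢ² - ∏ aᵢ - n + 1 < 0`. -/
theorem N_neg_of_middle_last (n : ℕ) (hn : 4 ≤ n + 1)
    (a : Fin (n + 1) → ℤ) (hmono : Monotone a) (h2 : ∀ i, 2 ≤ a i)
    (q : ℤ) (hq : q = ∏ i : Fin n, a i.castSucc)
    (hlo : (q : ℚ) / (n + 1) < (a (Fin.last n) : ℚ))
    (hhi : (a (Fin.last n) : ℚ) ≤ (q : ℚ) / 2) :
    (∑ i, a i ^ 2) - (∏ i, a i) - (n + 1) + 1 < 0 := by
  have hn3 : 3 ≤ n := by omega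
  set A := a (Fin.last n) with hA
  have hA2 : 2 ≤ A := h2 _
  have hq0 : 0 < q := by
    rw [hq]; exact Finset.prod_pos fun i _ => lt_of_lt_of_le two_pos (h2 _)
  -- integer versions of the bounds
  have hlo' : q + 1 ≤ (n + 1) * A := by
    have hn0 : (0 : ℚ) < (n : ℚ) + 1 := by positivity
    have h1 : (q : ℚ) < ((n : ℚ) + 1) * (A : ℚ) := by
      rw [div_lt_iff₀ hn0] at hlo; linarith
    have h2' : (q : ℤ) < ((n : ℤ) + 1) * A := by exact_mod_cast h1
    omega
  have hhi' : 2 * A ≤ q := by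
    have h1 : (A : ℚ) * 2 ≤ (q : ℚ) := by
      rw [le_div_iff₀ (by norm_num : (0:ℚ) < 2)] at hhi; linarith
    have : (A : ℤ) * 2 ≤ q := by exact_mod_cast h1
    linarith
  -- bound on the sum of squares of the first n terms
  set S : ℤ := ∑ i : Fin n, a i.castSucc ^ 2 with hS
  have hSbound : 4 ^ (n - 1) * S ≤ n * q ^ 2 := by
    have key : ∀ j : Fin n, 4 ^ (n - 1) * a j.castSucc ^ 2 ≤ q ^ 2 := by
      intro j
      have h1 : (2 : ℤ) ^ (n - 1) * a j.castSucc ≤ q := by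
        rw [hq, ← Finset.prod_erase_mul _ _ (Finset.mem_univ j)]
        have hcard : (Finset.univ.erase j).card = n - 1 := by
          rw [Finset.card_erase_of_mem (Finset.mem_univ j), Finset.card_univ, Fintype.card_fin]
        have : (2 : ℤ) ^ (n - 1) ≤ ∏ i ∈ Finset.univ.erase j, a i.castSucc := by
          rw [← hcard]
          calc (2:ℤ) ^ (Finset.univ.erase j).card
              = ∏ _i ∈ Finset.univ.erase j, (2 : ℤ) := by rw [Finset.prod_const]
            _ ≤ ∏ i ∈ Finset.univ.erase j, a i.castSucc :=
                Finset.prod_le_prod (fun i _ => by norm_num) (fun i _ => h2 _)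
        have haj : (0 : ℤ) ≤ a j.castSucc := le_trans (by norm_num) (h2 _)
        exact mul_le_mul_of_nonneg_right this haj
      have haj : (0 : ℤ) ≤ a j.castSucc := le_trans (by norm_num) (h2 _)
      have hpos : (0 : ℤ) ≤ (2 : ℤ) ^ (n - 1) * a j.castSucc := by positivity
      have h4 : (4 : ℤ) ^ (n - 1) = ((2 : ℤ) ^ (n - 1)) ^ 2 := by
        rw [← pow_mul, mul_comm, pow_mul]; norm_num
      calc 4 ^ (n - 1) * a j.castSucc ^ 2
          = ((2:ℤ) ^ (n - 1) * a j.castSucc) ^ 2 := by rw [h4]; ring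
        _ ≤ q ^ 2 := by nlinarith
    calc 4 ^ (n - 1) * S = ∑ j : Fin n, 4 ^ (n - 1) * a j.castSucc ^ 2 := by
          rw [hS, Finset.mul_sum]
      _ ≤ ∑ _j : Fin n, q ^ 2 := Finset.sum_le_sum fun j _ => key j
      _ = n * q ^ 2 := by rw [Finset.sum_const, Finset.card_univ, Fintype.card_fin]; ring
  -- 4^(n-1) ≥ (n+1)^2
  have hpow : ((n : ℤ) + 1) ^ 2 ≤ 4 ^ (n - 1) := by
    obtain ⟨m, rfl⟩ : ∃ m, n = m + 3 := ⟨n - 3, by omega⟩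
    have : ((m : ℤ) + 4) ^ 2 ≤ 4 ^ (m + 2) := pow_aux m
    have heq : m + 3 - 1 = m + 2 := by omega
    rw [heq]
    push_cast
    linarith
  -- the quadratic estimate
  have hAq : A ≤ q - A := by linarith
  have hpos1 : 0 ≤ (n + 1 : ℤ) * A - (q + 1) := by linarith
  have hpos2 : (q + 1) ≤ (n + 1 : ℤ) * (q - A) := le_trans hlo'
    (by nlinarith [h2 (Fin.last n)])
  have hquad : (n : ℤ) * q ^ 2 ≤ ((n : ℤ) + 1) ^ 2 * (A * (q - A)) := by
    nlinarith [mul_nonneg hpos1 (by linarith : (0:ℤ) ≤ (n+1:ℤ) * (q - A) - (q+1)),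
      mul_pos hq0 (by push_cast; omega : (0:ℤ) < (n:ℤ) - 1)]
  have hAqA : (0 : ℤ) ≤ A * (q - A) := mul_nonneg (by linarith) (by linarith)
  have hquad2 : ((n : ℤ) + 1) ^ 2 * (A * (q - A)) ≤ 4 ^ (n - 1) * (A * (q - A)) :=
    mul_le_mul_of_nonneg_right hpow hAqA
  -- conclude S + A^2 - q*A ≤ 0
  have hmain : S + A ^ 2 - q * A ≤ 0 := by
    have h4pos : (0 : ℤ) < 4 ^ (n - 1) := by positivity
    nlinarith [hSbound, hquad, hquad2, mul_le_mul_of_nonneg_left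
      (le_refl (0:ℤ)) (le_of_lt h4pos)]
  -- assemble
  rw [Fin.sum_univ_castSucc, Fin.prod_univ_castSucc, ← hq, ← hS, ← hA]
  push_cast
  nlinarith [hmain]
end
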